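/- For every positive integer c there exists a constant C (depending only on c) such that for all integers n > c, every unique partition (𝒜,ℬ) of n and c with |𝒜| + |ℬ| = mup(n,c) has at most C parts different from ν, where ν is the smallest positive integer that does not divide c; that is, in any optimal unique partition all but at most C parts are equal to ν. -/
import Mathlib



/-- `(𝒜, ℬ)` is a *unique partition* of `A` and `B`: the parts are positive, `𝒜` sums to
`A`, `ℬ` sums to `B`, no element of `𝒜` equals an element of `ℬ`, and the only way to
split the combined multiset `𝒜 + ℬ` into an ordered pair of multisets summing to `A` and
`B` respectively is `(𝒜, ℬ)` itself, or `(ℬ, 𝒜)` in case `A = B`. -/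
def UniquePartition (A B : ℕ) (𝒜 ℬ : Multiset ℕ) : Prop :=
  (∀ x ∈ 𝒜, 0 < x) ∧ (∀ x ∈ ℬ, 0 < x) ∧ 𝒜.sum = A ∧ ℬ.sum = B ∧
  (∀ x ∈ 𝒜, x ∉ ℬ) ∧
  (∀ 𝒜' ℬ' : Multiset ℕ, 𝒜' + ℬ' = 𝒜 + ℬ → 𝒜'.sum = A → ℬ'.sum = B →
    (𝒜' = 𝒜 ∧ ℬ' = ℬ) ∨ (A = B ∧ 𝒜' = ℬ ∧ ℬ' = 𝒜))

/-- `mup(A, B)`: the maximum of `|𝒜| + |ℬ|` over all unique partitions of `A` and `B`. -/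
noncomputable def mup (A B : ℕ) : ℕ :=
  sSup {s | ∃ 𝒜 ℬ : Multiset ℕ, UniquePartition A B 𝒜 ℬ ∧
    s = Multiset.card 𝒜 + Multiset.card ℬ}

/-- The smallest positive integer not dividing `c`. -/
noncomputable def minNonDivisor (c : ℕ) : ℕ := sInf {d | 0 < d ∧ ¬ d ∣ c}



lemma card_le_sum' {s : Multiset ℕ} (h : ∀ x ∈ s, 0 < x) : Multiset.card s ≤ s.sum := by
  simpa using Multiset.card_nsmul_le_sum (s := s) (a := 1) h

lemma nu_mem (c : ℕ) (hc : 1 ≤ c) :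
    0 < minNonDivisor c ∧ ¬ minNonDivisor c ∣ c := by
  have h1 : (c + 1) ∈ {d | 0 < d ∧ ¬ d ∣ c} := by
    constructor
    · omega
    · intro h
      have := Nat.le_of_dvd (by omega) h
      omega
  exact Nat.sInf_mem (⟨c + 1, h1⟩ : {d | 0 < d ∧ ¬ d ∣ c}.Nonempty)

lemma nu_le (c : ℕ) (hc : 1 ≤ c) : minNonDivisor c ≤ c + 1 := by
  apply Nat.sInf_le
  constructor
  · omega
  · intro h
    have := Nat.le_of_dvd (by omega) h
    omega

lemma dvd_of_lt_nu {c d : ℕ} (hd : 0 < d) (hlt : d < minNonDivisor c) : d ∣ c := by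
  by_contra h
  have h2 : minNonDivisor c ≤ d := Nat.sInf_le ⟨hd, h⟩
  omega

lemma mup_bdd (A B : ℕ) : BddAbove {s | ∃ 𝒜 ℬ : Multiset ℕ, UniquePartition A B 𝒜 ℬ ∧
    s = Multiset.card 𝒜 + Multiset.card ℬ} := by
  refine ⟨A + B, fun s hs => ?_⟩
  obtain ⟨𝒜, ℬ, ⟨hA, hB, hAs, hBs, _⟩, rfl⟩ := hs
  have h1 := card_le_sum' hA
  have h2 := card_le_sum' hB
  omega

/-- Lower bound construction for `mup`. -/
lemma mup_lower (c n : ℕ) (hc : 1 ≤ c) (hn : c + minNonDivisor c + 1 ≤ n) :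
    (n - (c + minNonDivisor c + 1)) / minNonDivisor c + 2 ≤ mup n c := by
  obtain ⟨hν0, hνd⟩ := nu_mem c hc
  obtain ⟨ν, hν⟩ : ∃ ν, minNonDivisor c = ν := ⟨_, rfl⟩
  rw [hν] at hν0 hνd hn ⊢
  set t := n - (c + ν + 1) with ht
  set q := t / ν with hq
  set r := t % ν with hr
  set R := c + ν + 1 + r with hR
  have hdm : ν * q + r = t := Nat.div_add_mod t ν
  have hcm : q * ν = ν * q := Nat.mul_comm q ν
  have hrν : r < ν := Nat.mod_lt _ hν0
  have hRc : c < R := by omega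
  have hRν : ν < R := by omega
  set 𝒜 : Multiset ℕ := Multiset.replicate q ν + {R} with h𝒜
  set ℬ : Multiset ℕ := {c} with hℬ
  have hAsum : 𝒜.sum = n := by
    simp only [h𝒜, Multiset.sum_add, Multiset.sum_replicate, smul_eq_mul,
      Multiset.sum_singleton]
    omega
  have hmemA : ∀ x ∈ 𝒜, x = ν ∨ x = R := by
    intro x hx
    simp only [h𝒜, Multiset.mem_add, Multiset.mem_replicate, Multiset.mem_singleton] at hx
    tauto
  have hνc : ν ≠ c := fun h => hνd (h ▸ dvd_refl ν)
  have hUP : UniquePartition n c 𝒜 ℬ := by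
    refine ⟨?_, ?_, hAsum, by simp [hℬ], ?_, ?_⟩
    · intro x hx; rcases hmemA x hx with rfl | rfl <;> omega
    · intro x hx; simp only [hℬ, Multiset.mem_singleton] at hx; omega
    · intro x hx
      simp only [hℬ, Multiset.mem_singleton]
      rcases hmemA x hx with rfl | rfl <;> omega
    · intro 𝒜' ℬ' hadd hA' hB'
      left
      have hB'le : ℬ' ≤ 𝒜 + ℬ := by
        rw [← hadd]
        exact le_add_self
      have hmem : ∀ x ∈ ℬ', x = ν ∨ x = R ∨ x = c := by
        intro x hx
        have hx2 : x ∈ 𝒜 + ℬ := Multiset.mem_of_le hB'le hx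
        rw [Multiset.mem_add] at hx2
        rcases hx2 with h | h
        · rcases hmemA x h with h' | h' <;> tauto
        · simp only [hℬ, Multiset.mem_singleton] at h; tauto
      have hRnot : R ∉ ℬ' := by
        intro h
        have := Multiset.single_le_sum (fun x _ => Nat.zero_le x) R h
        omega
      have hBeq : ℬ' = ℬ := by
        by_cases hcB : c ∈ ℬ'
        · obtain ⟨B'', rfl⟩ : ∃ B'', ℬ' = c ::ₘ B'' :=
            ⟨ℬ'.erase c, (Multiset.cons_erase hcB).symm⟩
          have hBs : B''.sum = 0 := by
            rw [Multiset.sum_cons] at hB'; omega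
          have hB0 : B'' = 0 := by
            rw [Multiset.eq_zero_iff_forall_notMem]
            intro x hx
            have h0 : x ≤ 0 := by
              have := Multiset.single_le_sum (fun y _ => Nat.zero_le y) x hx
              omega
            have := hmem x (Multiset.mem_cons_of_mem hx)
            omega
          rw [hB0, hℬ]; rfl
        · have hall : ∀ x ∈ ℬ', x = ν := by
            intro x hx
            rcases hmem x hx with h | h | h
            · exact h
            · exact absurd (h ▸ hx) hRnot
            · exact absurd (h ▸ hx) hcB
          have heq : ℬ' = Multiset.replicate (Multiset.card ℬ') ν :=
            (Multiset.eq_replicate_card).mpr hall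
          rw [heq, Multiset.sum_replicate, smul_eq_mul] at hB'
          exact absurd ⟨Multiset.card ℬ', by rw [Nat.mul_comm]; exact hB'.symm⟩ hνd
      refine ⟨?_, hBeq⟩
      rw [hBeq] at hadd
      exact add_right_cancel hadd
  have hmemset : q + 2 ∈ {s | ∃ 𝒜 ℬ : Multiset ℕ, UniquePartition n c 𝒜 ℬ ∧
      s = Multiset.card 𝒜 + Multiset.card ℬ} := by
    refine ⟨𝒜, ℬ, hUP, ?_⟩
    simp [h𝒜, hℬ]
  exact le_csSup (mup_bdd n c) hmemset

/-- Pure arithmetic finish. -/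
lemma arith_finish (ν c n q m a k b SmS BigS : ℕ) (hν0 : 0 < ν) (hν1 : ν ≤ c + 1)
    (h1 : SmS + (a * ν + BigS) = n) (h2 : k * (ν + 1) ≤ BigS)
    (h3 : q + 2 ≤ m + (a + k) + b) (h4 : n ≤ ν * q + c + 2 * ν)
    (hm : m ≤ ν * c) (hb : b ≤ c) :
    m + k + b ≤ (c+1)*(c+1)*c + 2*(c+1)*c + 5*c + 5 := by
  have e1 : ν * (q + 2) ≤ ν * (m + (a + k) + b) := Nat.mul_le_mul_left ν h3
  rw [Nat.mul_add, Nat.mul_add, Nat.mul_add, Nat.mul_add] at e1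
  have e2 : k * (ν + 1) = k * ν + k := by rw [Nat.mul_add, Nat.mul_one]
  have c1 : a * ν = ν * a := Nat.mul_comm a ν
  have c2 : k * ν = ν * k := Nat.mul_comm k ν
  have hkb : k ≤ ν * m + ν * b + c := by omega
  have f1 : ν * m ≤ (c+1)*((c+1)*c) :=
    le_trans (Nat.mul_le_mul_left ν hm) (Nat.mul_le_mul hν1 (Nat.mul_le_mul_right c hν1))
  have f2 : ν * b ≤ (c+1)*c := Nat.mul_le_mul hν1 hb
  have f3 : m ≤ (c+1)*c := le_trans hm (Nat.mul_le_mul_right c hν1)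
  have g1 : (c+1)*((c+1)*c) = (c+1)*(c+1)*c := (Nat.mul_assoc _ _ _).symm
  have g2 : 2*((c+1)*c) = 2*(c+1)*c := (Nat.mul_assoc 2 (c+1) c).symm
  omega


/-- for every positive integer `c` there is a constant `C` (depending only
on `c`) such that for all `n > c`, every optimal unique partition `(𝒜, ℬ)` of `n` and
`c` (one with `|𝒜| + |ℬ| = mup(n, c)`) has at most `C` parts different from `ν`, the
smallest positive non-divisor of `c`. -/
theorem stmt16 (c : ℕ) (hc : 1 ≤ c) :
    ∃ C : ℕ, ∀ n : ℕ, c < n → ∀ 𝒜 ℬ : Multiset ℕ, UniquePartition n c 𝒜 ℬ →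
      Multiset.card 𝒜 + Multiset.card ℬ = mup n c →
      Multiset.card ((𝒜 + ℬ).filter (· ≠ minNonDivisor c)) ≤ C := by
  classical
  obtain ⟨hν0, hνd⟩ := nu_mem c hc
  have hνc1 := nu_le c hc
  refine ⟨(c+1)*(c+1)*c + 2*(c+1)*c + 5*c + 5, ?_⟩
  intro n hn 𝒜 ℬ hUP hopt
  obtain ⟨hApos, hBpos, hAsum, hBsum, hdisj, huniq⟩ := hUP
  have hcardA : Multiset.card 𝒜 ≤ n := hAsum ▸ card_le_sum' hApos
  have hcardB : Multiset.card ℬ ≤ c := hBsum ▸ card_le_sum' hBpos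
  by_cases hsmall : n ≤ c + minNonDivisor c
  · have h1 : Multiset.card (Multiset.filter (· ≠ minNonDivisor c) (𝒜 + ℬ))
        ≤ Multiset.card (𝒜 + ℬ) := Multiset.card_le_card (Multiset.filter_le _ _)
    rw [Multiset.card_add] at h1
    nlinarith
  push_neg at hsmall
  have hlow := mup_lower c n hc (by omega)
  -- make ν opaque
  obtain ⟨ν, hν⟩ : ∃ ν, minNonDivisor c = ν := ⟨_, rfl⟩
  rw [hν] at hν0 hνd hνc1 hsmall hlow ⊢
  -- no nonempty submultiset of 𝒜 sums to c
  have hnosub : ∀ S : Multiset ℕ, S ≤ 𝒜 → S ≠ 0 → S.sum ≠ c := by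
    intro S hS hS0 hSc
    have h1 : (𝒜 - S) + S = 𝒜 := tsub_add_cancel_of_le hS
    have e1 : (𝒜 - S).sum + S.sum = n := by
      rw [← Multiset.sum_add, h1, hAsum]
    rcases huniq ((𝒜 - S) + ℬ) S
        (by rw [add_right_comm, h1])
        (by rw [Multiset.sum_add, hBsum]; omega) hSc with
      ⟨_, hSB⟩ | ⟨hnc, _⟩
    · obtain ⟨x, hx⟩ := Multiset.exists_mem_of_ne_zero hS0
      exact hdisj x (Multiset.mem_of_le hS hx) (hSB ▸ hx)
    · omega
  have hcount : ∀ d, 0 < d → d < ν → Multiset.count d 𝒜 ≤ c := by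
    intro d hd hdν
    have hdvd : d ∣ c := dvd_of_lt_nu hd (hν ▸ hdν)
    obtain ⟨e, he⟩ := hdvd
    have he1 : 1 ≤ e := by
      rcases Nat.eq_zero_or_pos e with h0 | h1
      · rw [h0, Nat.mul_zero] at he; omega
      · exact h1
    have hec : e ≤ c := he ▸ Nat.le_mul_of_pos_left e hd
    by_contra h
    push_neg at h
    have hle : Multiset.replicate e d ≤ 𝒜 := by
      rw [← Multiset.le_count_iff_replicate_le]
      omega
    have hne : Multiset.replicate e d ≠ 0 := by
      intro h0
      have := congrArg Multiset.card h0
      rw [Multiset.card_replicate, Multiset.card_zero] at this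
      omega
    refine hnosub _ hle hne ?_
    rw [Multiset.sum_replicate, smul_eq_mul, Nat.mul_comm, ← he]
  -- decomposition of 𝒜
  set Sm := 𝒜.filter (· < ν) with hSm
  set T := 𝒜.filter (fun x => ¬ x < ν) with hT
  set E := T.filter (· = ν) with hE
  set Big := T.filter (fun x => ¬ x = ν) with hBig
  have hsplit : Sm + (E + Big) = 𝒜 := by
    rw [hE, hBig, Multiset.filter_add_not, hSm, hT, Multiset.filter_add_not]
  have hEall : ∀ x ∈ E, x = ν := fun x hx => (Multiset.mem_filter.mp hx).2
  have hBigall : ∀ x ∈ Big, ν + 1 ≤ x := by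
    intro x hx
    have h1 := Multiset.mem_filter.mp hx
    have h2 := Multiset.mem_filter.mp h1.1
    omega
  have hEsum : E.sum = Multiset.card E * ν := by
    have h := Multiset.eq_replicate_card.mpr hEall
    rw [h, Multiset.sum_replicate, smul_eq_mul, Multiset.card_replicate]
  have hBigsum : Multiset.card Big * (ν + 1) ≤ Big.sum := by
    simpa using Multiset.card_nsmul_le_sum (s := Big) (a := ν + 1) hBigall
  have hsumsplit : Sm.sum + (Multiset.card E * ν + Big.sum) = n := by
    rw [← hEsum, ← Multiset.sum_add, ← Multiset.sum_add, hsplit, hAsum]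
  have hcardsplit : Multiset.card Sm + (Multiset.card E + Multiset.card Big)
      = Multiset.card 𝒜 := by
    rw [← Multiset.card_add, ← Multiset.card_add, hsplit]
  -- bound on card Sm
  have hmbound : Multiset.card Sm ≤ ν * c := by
    have h1 : Multiset.card Sm = ∑ d ∈ Sm.toFinset, Multiset.count d Sm :=
      (Multiset.toFinset_sum_count_eq Sm).symm
    have h2 : ∀ d ∈ Sm.toFinset, Multiset.count d Sm ≤ c := by
      intro d hd
      rw [Multiset.mem_toFinset] at hd
      have hd1 := Multiset.mem_filter.mp hd
      have hd0 : 0 < d := hApos d hd1.1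
      calc Multiset.count d Sm ≤ Multiset.count d 𝒜 :=
            Multiset.count_le_of_le d (Multiset.filter_le _ _)
        _ ≤ c := hcount d hd0 hd1.2
    have h3 : Sm.toFinset ⊆ Finset.range ν := by
      intro d hd
      rw [Multiset.mem_toFinset] at hd
      exact Finset.mem_range.mpr (Multiset.mem_filter.mp hd).2
    calc Multiset.card Sm ≤ (Sm.toFinset).card * c := by
          rw [h1]; exact Finset.sum_le_card_nsmul _ _ _ h2
      _ ≤ ν * c := by
          have := Finset.card_le_card h3
          rw [Finset.card_range] at this
          exact Nat.mul_le_mul_right c this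
  -- lower bound via construction
  obtain ⟨q, hq⟩ : ∃ q, (n - (c + ν + 1)) / ν = q := ⟨_, rfl⟩
  rw [hq] at hlow
  have h4 : n ≤ ν * q + c + 2 * ν := by
    rw [← hq]
    have h5 := Nat.div_add_mod (n - (c + ν + 1)) ν
    have h6 := Nat.mod_lt (n - (c + ν + 1)) hν0
    omega
  have h3 : q + 2 ≤ Multiset.card Sm + (Multiset.card E + Multiset.card Big)
      + Multiset.card ℬ := by
    rw [hcardsplit]
    omega
  have key := arith_finish ν c n q (Multiset.card Sm) (Multiset.card E)
    (Multiset.card Big) (Multiset.card ℬ) Sm.sum Big.sum hν0 hνc1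
    hsumsplit hBigsum h3 h4 hmbound hcardB
  -- final filter bound
  rw [Multiset.filter_add, Multiset.card_add]
  have hgB : Multiset.card (Multiset.filter (· ≠ ν) ℬ) ≤ Multiset.card ℬ :=
    Multiset.card_le_card (Multiset.filter_le _ _)
  have hgA : Multiset.card (Multiset.filter (· ≠ ν) 𝒜)
      ≤ Multiset.card Sm + Multiset.card Big := by
    have hfs : Multiset.filter (· ≠ ν) 𝒜 =
        Multiset.filter (· ≠ ν) Sm +
        (Multiset.filter (· ≠ ν) E + Multiset.filter (· ≠ ν) Big) := by
      rw [← Multiset.filter_add, ← Multiset.filter_add, hsplit]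
    rw [hfs]
    have hE0 : Multiset.filter (· ≠ ν) E = 0 := by
      rw [Multiset.filter_eq_nil]
      intro x hx
      simp [hEall x hx]
    rw [hE0]
    simp only [Multiset.card_add, Multiset.card_zero]
    have c1 : Multiset.card (Multiset.filter (· ≠ ν) Sm) ≤ Multiset.card Sm :=
      Multiset.card_le_card (Multiset.filter_le _ _)
    have c2 : Multiset.card (Multiset.filter (· ≠ ν) Big) ≤ Multiset.card Big :=
      Multiset.card_le_card (Multiset.filter_le _ _)
    omega
  omega
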